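/- arXiv:2303.10027 — 3 statements merged into one kernel-verified Lean document; each statement's English description precedes it below -/
import Mathlib

section
/- Let M be a non-singular integer m×m matrix and D ⊂ Z^m a finite digit set containing 0 such that Z^m ⊆ Fin_D(M). Then Fin_D(M) is closed under addition and subtraction. -/
open Matrix BigOperators

/-- `j`-th power (positive or negative) of a square matrix over a field. -/
noncomputable def mzpow {m : ℕ} (A : Matrix (Fin m) (Fin m) ℚ) (j : ℤ) :
    Matrix (Fin m) (Fin m) ℚ :=
  if 0 ≤ j then A ^ j.toNat else A⁻¹ ^ (-j).toNat

/-- Coordinatewise embedding of `ℤ^m` into `ℚ^m`. -/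
def castQ {m : ℕ} (v : Fin m → ℤ) : Fin m → ℚ := fun i => (v i : ℚ)

/-- The set `Fin_D(M)` of vectors with a finite `(M, D)`-representation. -/
noncomputable def FinRep {m : ℕ} (M : Matrix (Fin m) (Fin m) ℤ)
    (D : Finset (Fin m → ℤ)) : Set (Fin m → ℚ) :=
  { x | ∃ (I : Finset ℤ) (d : ℤ → Fin m → ℤ), (∀ j ∈ I, d j ∈ D) ∧
      x = ∑ j ∈ I, (mzpow (M.map (Int.cast : ℤ → ℚ)) j).mulVec (castQ (d j)) }

/-!
Since `ℤ^m ⊆ Fin_D(M)` and `Fin_D(M)` is stable under multiplication by every power of `M`,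
`Fin_D(M)` contains `⋃ₙ M⁻ⁿ ℤ^m`. Conversely every finite sum `∑ Mʲ dⱼ` lies in `M⁻ⁿ ℤ^m` once
`n` exceeds all the negative exponents. So `Fin_D(M) = ⋃ₙ M⁻ⁿ ℤ^m`, and this union is an
additive group because `M ℤ^m ⊆ ℤ^m` makes it increasing in `n`.
-/

section

variable {m : ℕ}

lemma mzpow_eq_zpow (A : Matrix (Fin m) (Fin m) ℚ) (j : ℤ) : mzpow A j = A ^ j := by
  unfold mzpow
  split_ifs with h
  · rw [← zpow_natCast, Int.toNat_of_nonneg h]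
  · rw [inv_pow', ← zpow_neg_natCast, Int.toNat_of_nonneg (by omega), neg_neg]

lemma castQ_add (v w : Fin m → ℤ) : castQ (v + w) = castQ v + castQ w := by
  funext i; simp [castQ]

lemma castQ_neg (v : Fin m → ℤ) : castQ (-v) = -castQ v := by
  funext i; simp [castQ]

lemma castQ_mulVec (A : Matrix (Fin m) (Fin m) ℤ) (v : Fin m → ℤ) :
    castQ (A *ᵥ v) = A.map (Int.cast : ℤ → ℚ) *ᵥ castQ v :=
  funext (RingHom.map_mulVec (Int.castRingHom ℚ) A v)

lemma pow_mulVec_castQ (A : Matrix (Fin m) (Fin m) ℤ) (n : ℕ) (v : Fin m → ℤ) :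
    A.map (Int.cast : ℤ → ℚ) ^ n *ᵥ castQ v = castQ (A ^ n *ᵥ v) := by
  rw [castQ_mulVec]
  exact congrArg (· *ᵥ castQ v) (Matrix.map_pow A (Int.castRingHom ℚ) n).symm

lemma isUnit_det_map_intCast {A : Matrix (Fin m) (Fin m) ℤ} (hA : A.det ≠ 0) :
    IsUnit (A.map (Int.cast : ℤ → ℚ)).det := by
  rw [← Int.cast_det, isUnit_iff_ne_zero]
  exact_mod_cast hA

def eventuallyIntegral (M : Matrix (Fin m) (Fin m) ℤ) : AddSubgroup (Fin m → ℚ) where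
  carrier := {x | ∃ (n : ℕ) (z : Fin m → ℤ), M.map (Int.cast : ℤ → ℚ) ^ n *ᵥ x = castQ z}
  zero_mem' := ⟨0, 0, by ext; simp [castQ]⟩
  add_mem' := by
    rintro x y ⟨n₁, z₁, hx⟩ ⟨n₂, z₂, hy⟩
    refine ⟨n₂ + n₁, M ^ n₂ *ᵥ z₁ + M ^ n₁ *ᵥ z₂, ?_⟩
    rw [mulVec_add, castQ_add, ← pow_mulVec_castQ, ← pow_mulVec_castQ, ← hx, ← hy,
      mulVec_mulVec, mulVec_mulVec, ← pow_add, ← pow_add, add_comm n₁]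
  neg_mem' := by
    rintro x ⟨n, z, hx⟩
    exact ⟨n, -z, by rw [mulVec_neg, hx, castQ_neg]⟩

variable {M : Matrix (Fin m) (Fin m) ℤ}

lemma zpow_mulVec_castQ_mem_eventuallyIntegral (hM : IsUnit (M.map (Int.cast : ℤ → ℚ)).det)
    (j : ℤ) (v : Fin m → ℤ) :
    M.map (Int.cast : ℤ → ℚ) ^ j *ᵥ castQ v ∈ eventuallyIntegral M := by
  refine ⟨(-j).toNat, M ^ (j + (-j).toNat).toNat *ᵥ v, ?_⟩
  have hexp : ((j + (-j).toNat).toNat : ℤ) = (-j).toNat + j := by omega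
  rw [← pow_mulVec_castQ, mulVec_mulVec, ← zpow_natCast, ← zpow_natCast, ← zpow_add hM, hexp]

lemma finRep_subset_eventuallyIntegral (hM : IsUnit (M.map (Int.cast : ℤ → ℚ)).det)
    (D : Finset (Fin m → ℤ)) : FinRep M D ⊆ eventuallyIntegral M := by
  rintro _ ⟨I, d, -, rfl⟩
  refine sum_mem fun j _ => ?_
  rw [mzpow_eq_zpow]
  exact zpow_mulVec_castQ_mem_eventuallyIntegral hM j (d j)

lemma zpow_mulVec_mem_finRep (hM : IsUnit (M.map (Int.cast : ℤ → ℚ)).det)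
    {D : Finset (Fin m → ℤ)} (k : ℤ) {x : Fin m → ℚ} (hx : x ∈ FinRep M D) :
    M.map (Int.cast : ℤ → ℚ) ^ k *ᵥ x ∈ FinRep M D := by
  obtain ⟨I, d, hd, rfl⟩ := hx
  refine ⟨I.map (addLeftEmbedding k), fun j => d (j - k), ?_, ?_⟩
  · simpa using hd
  · rw [Finset.sum_map, Matrix.mulVec_sum]
    refine Finset.sum_congr rfl fun j _ => ?_
    simp only [addLeftEmbedding_apply, add_sub_cancel_left, mzpow_eq_zpow, mulVec_mulVec,
      zpow_add hM]

lemma eventuallyIntegral_subset_finRep (hM : IsUnit (M.map (Int.cast : ℤ → ℚ)).det)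
    {D : Finset (Fin m → ℤ)} (hZ : ∀ v : Fin m → ℤ, castQ v ∈ FinRep M D) :
    (eventuallyIntegral M : Set (Fin m → ℚ)) ⊆ FinRep M D := by
  rintro x ⟨n, z, hx⟩
  have hx' : x = M.map (Int.cast : ℤ → ℚ) ^ (-(n : ℤ)) *ᵥ castQ z := by
    rw [← hx, mulVec_mulVec, ← zpow_natCast, ← zpow_add hM, neg_add_cancel, zpow_zero,
      one_mulVec]
  exact hx' ▸ zpow_mulVec_mem_finRep hM _ (hZ z)

end

theorem finrep_closed_add_sub_general {m : ℕ} (M : Matrix (Fin m) (Fin m) ℤ)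
    (hM : M.det ≠ 0) (D : Finset (Fin m → ℤ))
    (hZ : ∀ v : Fin m → ℤ, castQ v ∈ FinRep M D) :
    ∀ x ∈ FinRep M D, ∀ y ∈ FinRep M D,
      x + y ∈ FinRep M D ∧ x - y ∈ FinRep M D := by
  have hQ := isUnit_det_map_intCast hM
  have hEq : FinRep M D = eventuallyIntegral M :=
    (finRep_subset_eventuallyIntegral hQ D).antisymm (eventuallyIntegral_subset_finRep hQ hZ)
  rw [hEq]
  exact fun x hx y hy => ⟨add_mem hx hy, sub_mem hx hy⟩

theorem finrep_closed_add_sub {m : ℕ} (M : Matrix (Fin m) (Fin m) ℤ)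
    (hM : M.det ≠ 0) (D : Finset (Fin m → ℤ)) (h0 : (0 : Fin m → ℤ) ∈ D)
    (hZ : ∀ v : Fin m → ℤ, castQ v ∈ FinRep M D) :
    ∀ x ∈ FinRep M D, ∀ y ∈ FinRep M D,
      x + y ∈ FinRep M D ∧ x - y ∈ FinRep M D :=
  finrep_closed_add_sub_general M hM D hZ
end

section
/- Let f ∈ Z[X] be a polynomial all of whose complex roots have modulus different from 1. Then for any real t ≥ 1 there exists a non-zero polynomial g ∈ Z[X], g(X) = Σ_{l=0}^{p−1} c_l X^l, divisible by f, such that for some index L one has (1/t)·c_L > Σ_{l≠L} |c_l|. Moreover, if all roots of f have modulus > 1, then L = 0. -/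
/-!
Graeffe's root-squaring map sends `p` to the polynomial `q` with `q(X²) = p(X) p(-X)`; it keeps
integer coefficients and squares the roots, so after `k` steps we get `F ∈ ℤ[X]` whose roots are
the `α ^ 2 ^ k`, with `f ∣ F(X ^ 2 ^ k)`. Over `ℂ`, split `F = c · P_in · P_out` according to
`|α| < 1` or `|α| > 1`, and let `r` be the number of roots inside the unit circle. In the
`ℓ¹` norm, `P_in` is close to `X ^ r` and `P_out` to its constant term `b`, with
`‖F - c b X ^ r‖₁ ≤ |c b| (∏ (1 + min(|α|, |α|⁻¹) ^ 2 ^ k) - 1)`. Since no root lies on the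
unit circle this error becomes negligible, so the coefficient of `X ^ r` in `F`, and that of
`X ^ (r 2 ^ k)` in `F(X ^ 2 ^ k)`, dominates the sum of all the others.
-/

open Polynomial Finset Filter Topology

section MinInv

variable {α : Type*} [Field α] [LinearOrder α] [IsStrictOrderedRing α] {x : α}

lemma min_inv_eq_self (h0 : 0 ≤ x) (h1 : x ≤ 1) : min x x⁻¹ = x := by
  rcases h0.eq_or_lt with rfl | h0
  · simp
  · exact min_eq_left (h1.trans ((one_le_inv₀ h0).2 h1))

lemma min_inv_eq_inv (h : 1 ≤ x) : min x x⁻¹ = x⁻¹ :=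
  min_eq_right ((inv_le_one_of_one_le₀ h).trans h)

lemma min_pow_inv_pow (h0 : 0 ≤ x) (n : ℕ) : min (x ^ n) (x ^ n)⁻¹ = min x x⁻¹ ^ n := by
  rcases le_total x 1 with h | h
  · rw [min_inv_eq_self h0 h, min_inv_eq_self (pow_nonneg h0 n) (pow_le_one₀ h0 h)]
  · rw [min_inv_eq_inv h, min_inv_eq_inv (one_le_pow₀ h), inv_pow]

lemma min_inv_lt_one (h : x ≠ 1) : min x x⁻¹ < 1 := by
  rcases h.lt_or_gt with h | h
  · exact min_lt_of_left_lt h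
  · exact min_lt_of_right_lt (inv_lt_one_of_one_lt₀ h)

end MinInv

namespace Polynomial

section L1Norm

variable {R : Type*} [NormedRing R]

noncomputable def l1Norm (p : R[X]) : ℝ := p.sum fun _ a ↦ ‖a‖

lemma l1Norm_eq_sum_of_support_subset {p : R[X]} {s : Finset ℕ} (h : p.support ⊆ s) :
    l1Norm p = ∑ n ∈ s, ‖p.coeff n‖ :=
  sum_eq_of_subset _ (fun _ ↦ norm_zero) h

lemma l1Norm_nonneg (p : R[X]) : 0 ≤ l1Norm p :=
  Finset.sum_nonneg fun _ _ ↦ norm_nonneg _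

lemma norm_coeff_le_l1Norm (p : R[X]) (n : ℕ) : ‖p.coeff n‖ ≤ l1Norm p := by
  by_cases hn : n ∈ p.support
  · exact Finset.single_le_sum (f := fun n ↦ ‖p.coeff n‖) (fun _ _ ↦ norm_nonneg _) hn
  · simpa [notMem_support_iff.1 hn] using l1Norm_nonneg p

lemma l1Norm_le_of_norm_coeff_le {p q : R[X]} (h : ∀ n, ‖p.coeff n‖ ≤ ‖q.coeff n‖) :
    l1Norm p ≤ l1Norm q := by
  have hsupp : p.support ⊆ q.support := fun n hn ↦ by
    rw [mem_support_iff, ← norm_pos_iff] at hn ⊢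
    exact hn.trans_le (h n)
  rw [l1Norm_eq_sum_of_support_subset hsupp]
  exact Finset.sum_le_sum fun n _ ↦ h n

lemma l1Norm_add_le (p q : R[X]) : l1Norm (p + q) ≤ l1Norm p + l1Norm q := by
  rw [l1Norm_eq_sum_of_support_subset support_add,
    l1Norm_eq_sum_of_support_subset (p := p) subset_union_left,
    l1Norm_eq_sum_of_support_subset (p := q) subset_union_right, ← sum_add_distrib]
  exact Finset.sum_le_sum fun n _ ↦ (coeff_add p q n).symm ▸ norm_add_le _ _

lemma l1Norm_neg (p : R[X]) : l1Norm (-p) = l1Norm p := by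
  rw [l1Norm, l1Norm, Polynomial.sum, Polynomial.sum, support_neg]
  simp

lemma l1Norm_sub_le (p q : R[X]) : l1Norm (p - q) ≤ l1Norm p + l1Norm q := by
  simpa [sub_eq_add_neg, l1Norm_neg] using l1Norm_add_le p (-q)

lemma l1Norm_C_mul_X_pow (a : R) (n : ℕ) : l1Norm (C a * X ^ n) = ‖a‖ := by
  rw [C_mul_X_pow_eq_monomial, l1Norm, sum_monomial_index _ _ norm_zero]

lemma l1Norm_C_mul [NormMulClass R] (a : R) (p : R[X]) : l1Norm (C a * p) = ‖a‖ * l1Norm p := by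
  rw [← smul_eq_C_mul, l1Norm_eq_sum_of_support_subset (support_smul a p), l1Norm, Polynomial.sum,
    Finset.mul_sum]
  simp [norm_mul]

lemma l1Norm_eq_of_coeff_comp {p q : R[X]} (e : ℕ → ℕ) (he : e.Injective)
    (hcoeff : ∀ n, q.coeff (e n) = p.coeff n) (hzero : ∀ m ∉ Set.range e, q.coeff m = 0) :
    l1Norm q = l1Norm p := by
  have hsupp : q.support ⊆ p.support.image e := fun m hm ↦ by
    obtain ⟨n, rfl⟩ : m ∈ Set.range e := by
      by_contra h
      exact mem_support_iff.1 hm (hzero m h)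
    exact mem_image_of_mem e (by rw [mem_support_iff, ← hcoeff]; exact mem_support_iff.1 hm)
  rw [l1Norm_eq_sum_of_support_subset hsupp, sum_image he.injOn, l1Norm, Polynomial.sum]
  simp [hcoeff]

lemma l1Norm_X_pow_mul (p : R[X]) (n : ℕ) : l1Norm (X ^ n * p) = l1Norm p :=
  l1Norm_eq_of_coeff_comp (· + n) (add_left_injective n) (coeff_X_pow_mul p n) fun m hm ↦ by
    rw [coeff_X_pow_mul', if_neg]
    rintro hnm
    exact hm ⟨m - n, Nat.sub_add_cancel hnm⟩

lemma l1Norm_map {S : Type*} [NormedRing S] (φ : R →+* S) (hφ : ∀ a, ‖φ a‖ = ‖a‖)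
    (p : R[X]) :
    l1Norm (p.map φ) = l1Norm p := by
  rw [l1Norm_eq_sum_of_support_subset (support_map_subset φ p), l1Norm, Polynomial.sum]
  simp [hφ]

end L1Norm

section Dominant

variable {R : Type*} [NormedRing R]

def IsDominantCoeff (p : R[X]) (n : ℕ) (t : ℝ) : Prop :=
  t * (l1Norm p - ‖p.coeff n‖) < ‖p.coeff n‖

variable {p : R[X]} {n : ℕ} {t : ℝ}

lemma IsDominantCoeff.coeff_ne_zero (h : p.IsDominantCoeff n t) (ht : 0 ≤ t) :
    p.coeff n ≠ 0 := by
  have := mul_nonneg ht (sub_nonneg.2 (norm_coeff_le_l1Norm p n))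
  exact norm_pos_iff.1 (this.trans_lt h)

lemma isDominantCoeff_map_iff {S : Type*} [NormedRing S] (φ : R →+* S)
    (hφ : ∀ a, ‖φ a‖ = ‖a‖) :
    (p.map φ).IsDominantCoeff n t ↔ p.IsDominantCoeff n t := by
  rw [IsDominantCoeff, IsDominantCoeff, l1Norm_map φ hφ, coeff_map, hφ]

lemma IsDominantCoeff.C_mul [NormMulClass R] (h : p.IsDominantCoeff n t) {a : R} (ha : a ≠ 0) :
    (C a * p).IsDominantCoeff n t := by
  have ha' : 0 < ‖a‖ := norm_pos_iff.2 ha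
  rw [IsDominantCoeff, l1Norm_C_mul, coeff_C_mul, norm_mul]
  calc t * (‖a‖ * l1Norm p - ‖a‖ * ‖p.coeff n‖)
      = ‖a‖ * (t * (l1Norm p - ‖p.coeff n‖)) := by ring
    _ < ‖a‖ * ‖p.coeff n‖ := mul_lt_mul_of_pos_left h ha'

lemma IsDominantCoeff.mul_sum_erase_lt (h : p.IsDominantCoeff n t) :
    t * ∑ m ∈ (range (p.natDegree + 1)).erase n, ‖p.coeff m‖ < ‖p.coeff n‖ := by
  rw [IsDominantCoeff, l1Norm_eq_sum_of_support_subset (supp_subset_range (Nat.lt_add_one _))]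
    at h
  by_cases hn : n ∈ range (p.natDegree + 1)
  · rwa [sum_erase_eq_sub hn]
  · have hzero : p.coeff n = 0 :=
      coeff_eq_zero_of_natDegree_lt (by simpa [Nat.lt_succ_iff] using hn)
    rw [hzero, norm_zero, sub_zero] at h
    rwa [erase_eq_of_notMem hn, hzero, norm_zero]

lemma isDominantCoeff_of_l1Norm_sub_le {b : R} {η : ℝ} (ht : 0 ≤ t)
    (hη : l1Norm (p - C b * X ^ n) ≤ η) (hb : (t + 1) * η < ‖b‖) :
    p.IsDominantCoeff n t := by
  have hcoeff : ‖b‖ - η ≤ ‖p.coeff n‖ := by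
    have : ‖b - p.coeff n‖ ≤ η := by
      refine le_trans (le_of_eq ?_) ((norm_coeff_le_l1Norm _ n).trans hη)
      rw [coeff_sub, coeff_C_mul_X_pow, if_pos rfl, norm_sub_rev]
    linarith [norm_le_norm_add_norm_sub' b (p.coeff n)]
  have hrest : l1Norm p - ‖p.coeff n‖ ≤ η := by
    have herase : l1Norm (p - C (p.coeff n) * X ^ n) ≤ l1Norm (p - C b * X ^ n) := by
      refine l1Norm_le_of_norm_coeff_le fun m ↦ ?_
      simp only [coeff_sub, coeff_C_mul_X_pow]
      split_ifs with hm
      · simp [hm]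
      · exact le_rfl
    have := l1Norm_add_le (p - C (p.coeff n) * X ^ n) (C (p.coeff n) * X ^ n)
    rw [sub_add_cancel, l1Norm_C_mul_X_pow] at this
    linarith
  unfold IsDominantCoeff
  nlinarith

end Dominant

section Expand

variable {R : Type*} [NormedCommRing R]

lemma l1Norm_expand (p : R[X]) {q : ℕ} (hq : 0 < q) : l1Norm (expand R q p) = l1Norm p :=
  l1Norm_eq_of_coeff_comp (· * q) (mul_left_injective₀ hq.ne') (coeff_expand_mul hq p)
    fun m hm ↦ by
      rw [coeff_expand hq, if_neg]
      rintro ⟨k, rfl⟩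
      exact hm ⟨k, mul_comm k q⟩

lemma IsDominantCoeff.expand {p : R[X]} {n : ℕ} {t : ℝ} (h : p.IsDominantCoeff n t) {q : ℕ}
    (hq : 0 < q) :
    (expand R q p).IsDominantCoeff (n * q) t := by
  rwa [IsDominantCoeff, l1Norm_expand p hq, coeff_expand_mul hq]

end Expand

section ProdXSubC

variable {K : Type*} [NormedField K]

lemma l1Norm_X_sub_C_mul_le (a : K) (p : K[X]) :
    l1Norm ((X - C a) * p) ≤ (1 + ‖a‖) * l1Norm p := by
  have h := l1Norm_sub_le (X ^ 1 * p) (C a * p)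
  rw [l1Norm_X_pow_mul, l1Norm_C_mul, pow_one, ← sub_mul] at h
  linarith

lemma norm_coeff_zero_prod_X_sub_C (s : Multiset K) :
    ‖(s.map (X - C ·)).prod.coeff 0‖ = (s.map (‖·‖)).prod := by
  induction s using Multiset.induction_on with
  | empty => simp
  | cons a s ih => simp [mul_coeff_zero, ih]

lemma l1Norm_prod_X_sub_C_sub_C_coeff_zero_le (s : Multiset K) :
    l1Norm ((s.map (X - C ·)).prod - C ((s.map (X - C ·)).prod.coeff 0)) ≤
      (s.map (1 + ‖·‖)).prod - (s.map (‖·‖)).prod := by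
  induction s using Multiset.induction_on with
  | empty => simp [l1Norm]
  | cons a s ih =>
    set P := (s.map (X - C ·)).prod
    have hdecomp : (X - C a) * P - C (((X - C a) * P).coeff 0) =
        (X - C a) * (P - C (P.coeff 0)) + C (P.coeff 0) * X ^ 1 := by
      simp only [mul_coeff_zero, coeff_sub, coeff_X_zero, coeff_C_zero, zero_sub, neg_mul,
        map_neg, map_mul, sub_neg_eq_add, pow_one]
      ring
    simp only [Multiset.map_cons, Multiset.prod_cons]
    rw [hdecomp]
    have h1 := (l1Norm_X_sub_C_mul_le a _).trans
      (mul_le_mul_of_nonneg_left ih (by positivity : (0 : ℝ) ≤ 1 + ‖a‖))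
    have h2 := l1Norm_add_le ((X - C a) * (P - C (P.coeff 0))) (C (P.coeff 0) * X ^ 1)
    rw [l1Norm_C_mul_X_pow, norm_coeff_zero_prod_X_sub_C] at h2
    linarith

lemma l1Norm_prod_X_sub_C_mul_sub_le (s : Multiset K) (q : K[X]) (b : K) :
    l1Norm ((s.map (X - C ·)).prod * q - C b * X ^ Multiset.card s) ≤
      (s.map (1 + ‖·‖)).prod * (l1Norm (q - C b) + ‖b‖) - ‖b‖ := by
  induction s using Multiset.induction_on with
  | empty => simp
  | cons a s ih =>
    set P := (s.map (X - C ·)).prod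
    have hdecomp : (X - C a) * P * q - C b * X ^ (Multiset.card s + 1) =
        (X - C a) * (P * q - C b * X ^ Multiset.card s) - C (a * b) * X ^ Multiset.card s := by
      rw [map_mul]
      ring
    simp only [Multiset.map_cons, Multiset.prod_cons, Multiset.card_cons]
    rw [hdecomp]
    have h1 := (l1Norm_X_sub_C_mul_le a _).trans
      (mul_le_mul_of_nonneg_left ih (by positivity : (0 : ℝ) ≤ 1 + ‖a‖))
    have h2 := l1Norm_sub_le ((X - C a) * (P * q - C b * X ^ Multiset.card s))
      (C (a * b) * X ^ Multiset.card s)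
    rw [l1Norm_C_mul_X_pow, norm_mul] at h2
    linarith

lemma card_filter_norm_lt_one_map_pow (s : Multiset K) {n : ℕ} (hn : n ≠ 0) :
    Multiset.card ((s.map (· ^ n)).filter (‖·‖ < 1)) =
      Multiset.card (s.filter (‖·‖ < 1)) := by
  rw [Multiset.filter_map, Multiset.card_map]
  congr 1
  exact Multiset.filter_congr fun a _ ↦ by
    simp [norm_pow, pow_lt_one_iff_of_nonneg (norm_nonneg a) hn]

lemma prod_one_add_norm_eq_prod_norm_mul (s : Multiset K) :
    (s.map (1 + ‖·‖)).prod =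
      ((s.filter fun a ↦ ¬ ‖a‖ < 1).map (‖·‖)).prod *
        (s.map fun a ↦ 1 + min ‖a‖ ‖a‖⁻¹).prod := by
  induction s using Multiset.induction_on with
  | empty => simp
  | cons a s ih =>
    rw [Multiset.filter_cons]
    split_ifs with ha
    · simp only [Multiset.map_cons, Multiset.prod_cons, Multiset.zero_add, ih]
      rw [min_inv_eq_self (norm_nonneg a) ha.le]
      ring
    · have ha' : ‖a‖ ≠ 0 := by linarith [not_lt.1 ha]
      simp only [Multiset.map_cons, Multiset.prod_cons, Multiset.singleton_add, ih]
      rw [min_inv_eq_inv (not_lt.1 ha)]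
      field_simp
      ring

theorem isDominantCoeff_prod_X_sub_C {s : Multiset K} {t : ℝ} (ht : 0 ≤ t)
    (hs : (t + 1) * (s.map fun a ↦ 1 + min ‖a‖ ‖a‖⁻¹).prod < t + 2) :
    (s.map (X - C ·)).prod.IsDominantCoeff (Multiset.card (s.filter (‖·‖ < 1))) t := by
  set sIn := s.filter (‖·‖ < 1)
  set sOut := s.filter fun a ↦ ¬ ‖a‖ < 1
  have hsplit : s = sIn + sOut := (Multiset.filter_add_not _ s).symm
  set Q := (sOut.map (X - C ·)).prod
  set W := (sOut.map (‖·‖)).prod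
  set U := (sIn.map (1 + ‖·‖)).prod
  set V := (sOut.map (1 + ‖·‖)).prod
  have hW : 0 < W := Multiset.prod_pos fun x hx ↦ by
    obtain ⟨a, ha, rfl⟩ := Multiset.mem_map.1 hx
    linarith [not_lt.1 (Multiset.mem_filter.1 ha).2]
  have hU : 0 ≤ U := Multiset.prod_nonneg fun x hx ↦ by
    obtain ⟨a, -, rfl⟩ := Multiset.mem_map.1 hx
    positivity
  have hUV : U * V = W * (s.map fun a ↦ 1 + min ‖a‖ ‖a‖⁻¹).prod :=
    calc U * V = (s.map (1 + ‖·‖)).prod := by rw [hsplit, Multiset.map_add, Multiset.prod_add]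
      _ = _ := prod_one_add_norm_eq_prod_norm_mul s
  have hb : ‖Q.coeff 0‖ = W := norm_coeff_zero_prod_X_sub_C sOut
  have hQ : l1Norm (Q - C (Q.coeff 0)) ≤ V - W := l1Norm_prod_X_sub_C_sub_C_coeff_zero_le sOut
  rw [hsplit, Multiset.map_add, Multiset.prod_add]
  refine isDominantCoeff_of_l1Norm_sub_le ht
    (l1Norm_prod_X_sub_C_mul_sub_le sIn Q (Q.coeff 0)) ?_
  rw [hb]
  have hUQ : U * (l1Norm (Q - C (Q.coeff 0)) + W) ≤ U * V := by
    gcongr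
    linarith
  nlinarith

end ProdXSubC

section Graeffe

variable {R : Type*} [CommRing R]

noncomputable def graeffe (p : R[X]) : R[X] := contract 2 (p * p.comp (-X))

lemma coeff_comp_neg_X (p : R[X]) (n : ℕ) : (p.comp (-X)).coeff n = (-1) ^ n * p.coeff n := by
  rw [show (-X : R[X]) = C (-1) * X by simp, comp_C_mul_X_coeff, mul_comm]

lemma expand_graeffe [IsAddTorsionFree R] (p : R[X]) :
    expand R 2 (graeffe p) = p * p.comp (-X) := by
  ext n
  rw [graeffe, coeff_expand two_pos, coeff_contract two_ne_zero]
  split_ifs with hn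
  · rw [Nat.div_mul_cancel hn]
  · -- the product is even, so its odd coefficients vanish
    have heven : (p * p.comp (-X)).comp (-X) = p * p.comp (-X) := by
      rw [mul_comp, comp_neg_X_comp_neg_X, mul_comm]
    have h := coeff_comp_neg_X (p * p.comp (-X)) n
    rw [heven, (Nat.odd_iff.2 (Nat.two_dvd_ne_zero.1 hn)).neg_one_pow, neg_one_mul] at h
    exact (self_eq_neg.1 h).symm

lemma map_graeffe {S : Type*} [CommRing S] (φ : R →+* S) (p : R[X]) :
    (graeffe p).map φ = graeffe (p.map φ) := by
  ext n
  rw [graeffe, graeffe, coeff_map, coeff_contract two_ne_zero, coeff_contract two_ne_zero,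
    ← coeff_map, Polynomial.map_mul, Polynomial.map_comp, Polynomial.map_neg, map_X]

lemma graeffe_mul [IsAddTorsionFree R] (p q : R[X]) : graeffe (p * q) = graeffe p * graeffe q := by
  apply expand_injective two_pos
  rw [map_mul, expand_graeffe, expand_graeffe, expand_graeffe, mul_comp]
  ring

lemma graeffe_C [IsAddTorsionFree R] (a : R) : graeffe (C a) = C (a ^ 2) := by
  apply expand_injective two_pos
  rw [expand_graeffe, expand_C, C_comp, ← C_mul, sq]

lemma graeffe_X_sub_C [IsAddTorsionFree R] (a : R) : graeffe (X - C a) = -(X - C (a ^ 2)) := by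
  apply expand_injective two_pos
  rw [expand_graeffe, map_neg, map_sub, expand_X, expand_C, sub_comp, X_comp, C_comp, C_pow]
  ring

lemma graeffe_prod_X_sub_C [IsAddTorsionFree R] (s : Multiset R) :
    graeffe (s.map (X - C ·)).prod =
      C ((-1) ^ Multiset.card s) * ((s.map (· ^ 2)).map (X - C ·)).prod := by
  induction s using Multiset.induction_on with
  | empty => simpa using graeffe_C (1 : R)
  | cons a s ih =>
    simp only [Multiset.map_cons, Multiset.prod_cons, Multiset.card_cons, graeffe_mul, ih,
      graeffe_X_sub_C, pow_succ, map_mul, map_neg, map_one]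
    ring

lemma dvd_expand_iterate_graeffe [IsAddTorsionFree R] (p : R[X]) (k : ℕ) :
    p ∣ expand R (2 ^ k) (graeffe^[k] p) := by
  induction k with
  | zero => simp
  | succ k ih =>
    rw [Function.iterate_succ_apply', pow_succ, expand_mul, expand_graeffe, map_mul]
    exact ih.mul_right _

lemma exists_iterate_graeffe_C_mul_prod_X_sub_C [IsDomain R] [IsAddTorsionFree R] {γ : R}
    (hγ : γ ≠ 0) (s : Multiset R) (k : ℕ) :
    ∃ γ' ≠ 0, graeffe^[k] (C γ * (s.map (X - C ·)).prod) =
      C γ' * ((s.map (· ^ 2 ^ k)).map (X - C ·)).prod := by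
  induction k with
  | zero => exact ⟨γ, hγ, by simp⟩
  | succ k ih =>
    obtain ⟨γ', hγ', h⟩ := ih
    refine ⟨γ' ^ 2 * (-1) ^ Multiset.card s, by simp [hγ'], ?_⟩
    rw [Function.iterate_succ_apply', h, graeffe_mul, graeffe_C, graeffe_prod_X_sub_C,
      Multiset.card_map, ← mul_assoc, ← C_mul, Multiset.map_map (· ^ 2)]
    simp only [Function.comp_def, ← pow_mul, ← pow_succ]

end Graeffe

end Polynomial

lemma tendsto_multiset_prod_one_add_pow {ι : Type*} {s : Multiset ι} {w : ι → ℝ}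
    (hw : ∀ i ∈ s, 0 ≤ w i ∧ w i < 1) :
    Tendsto (fun n : ℕ ↦ (s.map fun i ↦ 1 + w i ^ n).prod) atTop (𝓝 1) := by
  simpa using tendsto_multiset_prod s fun i hi ↦
    (tendsto_pow_atTop_nhds_zero_of_lt_one (hw i hi).1 (hw i hi).2).const_add 1

theorem exists_isDominantCoeff_iterate_graeffe {f : ℤ[X]} (hf : f ≠ 0)
    (hroots : ∀ z : ℂ, (f.map (Int.castRingHom ℂ)).IsRoot z → ‖z‖ ≠ 1) {t : ℝ}
    (ht : 0 ≤ t) :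
    ∃ k, (graeffe^[k] f).IsDominantCoeff
      (Multiset.card ((f.map (Int.castRingHom ℂ)).roots.filter (‖·‖ < 1))) t := by
  set F := f.map (Int.castRingHom ℂ)
  have hF : F ≠ 0 := (Polynomial.map_ne_zero_iff (RingHom.injective_int _)).2 hf
  obtain ⟨k, hk⟩ : ∃ k : ℕ,
      (t + 1) * (F.roots.map fun a ↦ 1 + min ‖a‖ ‖a‖⁻¹ ^ 2 ^ k).prod < t + 2 := by
    have hlim := ((tendsto_multiset_prod_one_add_pow fun a ha ↦
      ⟨by positivity, min_inv_lt_one (hroots a (mem_roots'.1 ha).2)⟩).comp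
      (tendsto_pow_atTop_atTop_of_one_lt one_lt_two)).const_mul (t + 1)
    exact (hlim.eventually (gt_mem_nhds (by linarith))).exists
  obtain ⟨γ, hγ, hgraeffe⟩ :=
    exists_iterate_graeffe_C_mul_prod_X_sub_C (leadingCoeff_ne_zero.2 hF) F.roots k
  rw [C_leadingCoeff_mul_prod_multiset_X_sub_C IsAlgClosed.card_roots_eq_natDegree] at hgraeffe
  have hnorm (a : ℤ) : ‖Int.castRingHom ℂ a‖ = ‖a‖ :=
    (Complex.norm_intCast a).trans (Int.norm_eq_abs a).symm
  refine ⟨k, (isDominantCoeff_map_iff (Int.castRingHom ℂ) hnorm).1 ?_⟩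
  rw [Function.Semiconj.iterate_right (map_graeffe _) k f, hgraeffe,
    ← card_filter_norm_lt_one_map_pow F.roots (pow_ne_zero k two_ne_zero)]
  refine (isDominantCoeff_prod_X_sub_C ht ?_).C_mul hγ
  simpa only [Multiset.map_map, Function.comp_def, norm_pow, min_pow_inv_pow (norm_nonneg _)]
    using hk

theorem dominant_coefficient_multiple (f : Polynomial ℤ) (hf : f ≠ 0)
    (hroots : ∀ z : ℂ, (f.map (Int.castRingHom ℂ)).IsRoot z → ‖z‖ ≠ 1) :
    ∀ t : ℝ, 1 ≤ t →
      ∃ (g : Polynomial ℤ) (L : ℕ), g ≠ 0 ∧ f ∣ g ∧ L ≤ g.natDegree ∧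
        (1 / t) * (g.coeff L : ℝ)
          > ∑ l ∈ (Finset.range (g.natDegree + 1)).erase L, |(g.coeff l : ℝ)| ∧
        ((∀ z : ℂ, (f.map (Int.castRingHom ℂ)).IsRoot z → 1 < ‖z‖) → L = 0) := by
  intro t ht
  have ht0 : 0 < t := one_pos.trans_le ht
  obtain ⟨k, hk⟩ := exists_isDominantCoeff_iterate_graeffe hf hroots ht0.le
  set r := Multiset.card ((f.map (Int.castRingHom ℂ)).roots.filter (‖·‖ < 1))
  set G := expand ℤ (2 ^ k) (graeffe^[k] f)
  have hdom : G.IsDominantCoeff (r * 2 ^ k) t := hk.expand (pow_pos two_pos k)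
  set g := C (G.coeff (r * 2 ^ k)).sign * G
  have hg : g.IsDominantCoeff (r * 2 ^ k) t :=
    hdom.C_mul (Int.sign_eq_zero_iff_zero.not.2 (hdom.coeff_ne_zero ht0.le))
  have hgL : g.coeff (r * 2 ^ k) = |G.coeff (r * 2 ^ k)| := by
    rw [coeff_C_mul, Int.sign_mul_self_eq_abs]
  have hgL0 := hg.coeff_ne_zero ht0.le
  refine ⟨g, r * 2 ^ k, fun h0 ↦ hgL0 (by rw [h0, coeff_zero]),
    (dvd_expand_iterate_graeffe f k).mul_left _, le_natDegree_of_ne_zero hgL0, ?_,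
    fun hout ↦ ?_⟩
  · have hsum := hg.mul_sum_erase_lt
    simp only [Int.norm_eq_abs, hgL, Int.cast_abs, abs_abs] at hsum
    rw [hgL, Int.cast_abs, gt_iff_lt, one_div, inv_mul_eq_div, lt_div_iff₀ ht0, mul_comm]
    exact hsum
  · simp only [r, Multiset.card_eq_zero.2 (Multiset.filter_eq_nil.2 fun a ha ↦
      (hout a (mem_roots'.1 ha).2).not_gt), zero_mul]
end

section
/- Let M ∈ Z^{m×m} be non-singular with no eigenvalue of modulus 1, let g(X) = Σ_{l=0}^{p−1} c_l X^l with g(M) = 0 and dominant coefficient c_L ≥ 4(C + Σ_{l≠L}|c_l|) where C = c_L − 4⌊c_L/4⌋, and set K = ⌊c_L/4⌋, D = [−3K,3K)^m ∩ Z^m, D' = [−2K,2K)^m ∩ Z^m, Q = [−1,1]^m ∩ Z^m. Then D + D ⊆ D' + 4K·Q, and for each w ∈ D+D there is a unique q ∈ Q with w − 4K·q ∈ D'. Moreover, for any choice of w_j ∈ D+D and the corresponding q_j ∈ Q, the vectors z_j = w_j − Σ_{l=0}^{p−1} c_l q_{j+L−l} belong to D. -/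
/-!
Coordinatewise, a sum of two digits of `[-3K, 3K)` lies in `[-6K, 6K)`, and the three translates
`[-2K, 2K) + 4Kq`, `q ∈ {-1, 0, 1}`, tile this interval, so the carry `q` exists and is unique.
For the second claim split `g.coeff L = 4K + C`: the term `w_j - 4K q_j` lies in `[-2K, 2K)`, and
the remaining contributions `C q_j` and `c_l q_{j+L-l}` (`l ≠ L`) have total size at most
`C + ∑_{l ≠ L} |c_l| ≤ K`, which is what the dominance hypothesis gives since `C < 4`.
-/

theorem Finset.abs_sum_mul_le_sum_abs {ι R : Type*} [Ring R] [LinearOrder R] [IsOrderedRing R]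
    (s : Finset ι) (c r : ι → R) (hr : ∀ l ∈ s, |r l| ≤ 1) :
    |∑ l ∈ s, c l * r l| ≤ ∑ l ∈ s, |c l| :=
  (Finset.abs_sum_le_sum_abs _ _).trans <| Finset.sum_le_sum fun l hl => by
    rw [abs_mul]; exact mul_le_of_le_one_right (abs_nonneg _) (hr l hl)

namespace ParallelAddition

def carry (K x : ℤ) : ℤ :=
  if x < -(2 * K) then -1 else if x < 2 * K then 0 else 1

variable {K x q : ℤ}

theorem carry_mem_Icc : -1 ≤ carry K x ∧ carry K x ≤ 1 := by
  unfold carry; split_ifs <;> norm_num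

theorem sub_carry_mem_Ico (hx : -(6 * K) ≤ x ∧ x < 6 * K) :
    -(2 * K) ≤ x - 4 * K * carry K x ∧ x - 4 * K * carry K x < 2 * K := by
  unfold carry; split_ifs <;> omega

theorem eq_carry_of_sub_mem_Ico (hq : -1 ≤ q ∧ q ≤ 1)
    (h : -(2 * K) ≤ x - 4 * K * q ∧ x - 4 * K * q < 2 * K) : q = carry K x := by
  have hq' : q = -1 ∨ q = 0 ∨ q = 1 := by omega
  unfold carry
  rcases hq' with rfl | rfl | rfl <;> split_ifs <;> omega

theorem existsUnique_carry {ι : Type*} {w : ι → ℤ} (hw : ∀ i, -(6 * K) ≤ w i ∧ w i < 6 * K) :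
    ∃! q : ι → ℤ, (∀ i, -1 ≤ q i ∧ q i ≤ 1) ∧
      ∀ i, -(2 * K) ≤ (w - (4 * K) • q) i ∧ (w - (4 * K) • q) i < 2 * K :=
  ⟨fun i => carry K (w i), ⟨fun _ => carry_mem_Icc, fun i => sub_carry_mem_Ico (hw i)⟩,
    fun _ ⟨hq, h⟩ => funext fun i => eq_carry_of_sub_mem_Ico (hq i) (h i)⟩

theorem sub_sum_mem_Ico {ι : Type*} [DecidableEq ι] {s : Finset ι} {c r : ι → ℤ} {L : ι}
    {C K x : ℤ} (hL : L ∈ s) (hr : ∀ l ∈ s, |r l| ≤ 1) (hcL : c L = 4 * K + C) (hC : 0 ≤ C)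
    (hdom : C + ∑ l ∈ s.erase L, |c l| ≤ K)
    (hx : -(2 * K) ≤ x - 4 * K * r L ∧ x - 4 * K * r L < 2 * K) :
    -(3 * K) ≤ x - ∑ l ∈ s, c l * r l ∧ x - ∑ l ∈ s, c l * r l < 3 * K := by
  have hsplit : x - ∑ l ∈ s, c l * r l
      = (x - 4 * K * r L) - C * r L - ∑ l ∈ s.erase L, c l * r l := by
    rw [← Finset.add_sum_erase _ _ hL, hcL]; ring
  have hlead : |C * r L| ≤ C := by
    rw [abs_mul, abs_of_nonneg hC]; exact mul_le_of_le_one_right hC (hr L hL)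
  have hrest := Finset.abs_sum_mul_le_sum_abs (s.erase L) c r
    fun l hl => hr l (Finset.mem_of_mem_erase hl)
  rw [hsplit]; rw [abs_le] at hlead hrest
  constructor <;> linarith [hlead.1, hlead.2, hrest.1, hrest.2]

end ParallelAddition

open ParallelAddition in
theorem parallel_addition_digit_bounds_general {m : ℕ}
    (g : Polynomial ℤ) (L : ℕ) (hL : L ≤ g.natDegree)
    (hdom : g.coeff L ≥ 4 * ((g.coeff L - 4 * (g.coeff L / 4)) +
        ∑ l ∈ (Finset.range (g.natDegree + 1)).erase L, |g.coeff l|))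
    (K : ℤ) (hK : K = g.coeff L / 4)
    (D D' Q : Set (Fin m → ℤ))
    (hD : D = {v | ∀ i, -(3 * K) ≤ v i ∧ v i < 3 * K})
    (hD' : D' = {v | ∀ i, -(2 * K) ≤ v i ∧ v i < 2 * K})
    (hQ : Q = {v | ∀ i, -1 ≤ v i ∧ v i ≤ 1}) :
    (∀ w : Fin m → ℤ, (∃ a ∈ D, ∃ b ∈ D, w = a + b) →
        ∃! q : Fin m → ℤ, q ∈ Q ∧ w - (4 * K) • q ∈ D') ∧
    (∀ (w q : ℤ → Fin m → ℤ),
        (∀ j, ∃ a ∈ D, ∃ b ∈ D, w j = a + b) →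
        (∀ j, q j ∈ Q ∧ w j - (4 * K) • q j ∈ D') →
        ∀ j : ℤ,
          (w j - ∑ l ∈ Finset.range (g.natDegree + 1),
              g.coeff l • q (j + (L : ℤ) - (l : ℤ))) ∈ D) := by
  subst hD hD' hQ
  refine ⟨?_, fun w q _ hq j i => ?_⟩
  · rintro w ⟨a, ha, b, hb, rfl⟩
    exact existsUnique_carry fun i => by
      have := ha i; have := hb i; constructor <;> simp only [Pi.add_apply] <;> omega
  · set C := g.coeff L - 4 * (g.coeff L / 4)
    have hLmem : L ∈ Finset.range (g.natDegree + 1) := Finset.mem_range.mpr (by omega)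
    have hC : 0 ≤ C := by omega
    have hCS : C + ∑ l ∈ (Finset.range (g.natDegree + 1)).erase L, |g.coeff l| ≤ K := by omega
    simpa using sub_sum_mem_Ico (r := fun l : ℕ => q (j + L - l) i) hLmem
      (fun l _ => abs_le.mpr ((hq _).1 i)) (by omega : g.coeff L = 4 * K + C) hC hCS
      (by simpa using (hq j).2 i)

theorem parallel_addition_digit_bounds {m : ℕ} (M : Matrix (Fin m) (Fin m) ℤ)
    (hM : M.det ≠ 0)
    (heig : ∀ z : ℂ, (M.map (Int.cast : ℤ → ℂ)).charpoly.IsRoot z → ‖z‖ ≠ 1)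
    (g : Polynomial ℤ) (L : ℕ) (hgM : Polynomial.aeval M g = 0) (hL : L ≤ g.natDegree)
    (hdom : g.coeff L ≥ 4 * ((g.coeff L - 4 * (g.coeff L / 4)) +
        ∑ l ∈ (Finset.range (g.natDegree + 1)).erase L, |g.coeff l|))
    (K : ℤ) (hK : K = g.coeff L / 4) (hK1 : 1 ≤ K)
    (D D' Q : Set (Fin m → ℤ))
    (hD : D = {v | ∀ i, -(3 * K) ≤ v i ∧ v i < 3 * K})
    (hD' : D' = {v | ∀ i, -(2 * K) ≤ v i ∧ v i < 2 * K})
    (hQ : Q = {v | ∀ i, -1 ≤ v i ∧ v i ≤ 1}) :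
    (∀ w : Fin m → ℤ, (∃ a ∈ D, ∃ b ∈ D, w = a + b) →
        ∃! q : Fin m → ℤ, q ∈ Q ∧ w - (4 * K) • q ∈ D') ∧
    (∀ (w q : ℤ → Fin m → ℤ),
        (∀ j, ∃ a ∈ D, ∃ b ∈ D, w j = a + b) →
        (∀ j, q j ∈ Q ∧ w j - (4 * K) • q j ∈ D') →
        ∀ j : ℤ,
          (w j - ∑ l ∈ Finset.range (g.natDegree + 1),
              g.coeff l • q (j + (L : ℤ) - (l : ℤ))) ∈ D) :=
  parallel_addition_digit_bounds_general g L hL hdom K hK D D' Q hD hD' hQ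
end
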